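/- There is an absolute constant C such that the following holds. Let a : {dyadic intervals of ℝ} → [0,∞) satisfy the Carleson condition Σ_{I dyadic, I ⊆ J} a(I) ≤ A · |J| for every dyadic interval J, where A ≥ 0. Then for every h ∈ L²(ℝ), Σ_{I dyadic} a(I) · ( (1/|I|) ∫_I |h| )² ≤ C · A · ‖h‖_{L²(ℝ)}². -/

import Mathlib

open MeasureTheory

/-- The dyadic interval `[2^j m, 2^j (m+1))`. -/
noncomputable def dyadicI (j m : ℤ) : Set ℝ :=
  Set.Ico ((2 : ℝ) ^ j * m) ((2 : ℝ) ^ j * (m + 1))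

/-!
A discrete layer-cake argument over the heights `t = 2^k`. Since `x² ≤ 4 ∑_{2^k < x} 4^k`, it
suffices to show `t · ∑_{⟨F⟩_I > t} a(I) ≤ 2A ∫ F·1{2F > t}` for each `t`. An interval with
`⟨F⟩_I > t` satisfies `t²|I| ≤ 4‖F‖₂²`, so it lies in a maximal such interval; the maximal ones are
pairwise disjoint, the Carleson condition bounds the weights inside each of them by `A|I|`, and
`⟨F⟩_I > t` gives `t|I| ≤ 2 ∫_I F·1{2F > t}`. Summing over `k` with `∑_{2^k < 2F} 2^k ≤ 4F`
gives the constant `32`.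
-/

open Set
open scoped ENNReal

lemma two_zpow_le_two_zpow_iff {i j : ℤ} : (2 : ℝ≥0∞) ^ i ≤ 2 ^ j ↔ i ≤ j := by
  rw [← ENNReal.coe_ofNat, ← ENNReal.coe_zpow two_ne_zero, ← ENNReal.coe_zpow two_ne_zero,
    ENNReal.coe_le_coe, zpow_le_zpow_iff_right₀ one_lt_two]

lemma ofReal_two_zpow (j : ℤ) : ENNReal.ofReal ((2 : ℝ) ^ j) = 2 ^ j := by
  rw [← NNReal.coe_ofNat, ← NNReal.coe_zpow, ENNReal.ofReal_coe_nnreal,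
    ENNReal.coe_zpow two_ne_zero, ENNReal.coe_ofNat]

lemma bddAbove_setOf_mul_two_zpow_le {c K : ℝ≥0∞} (hc : c ≠ 0) (hK : K ≠ ⊤) :
    BddAbove {j : ℤ | c * 2 ^ j ≤ K} := by
  obtain ⟨n, hn⟩ := ENNReal.exists_nat_gt (ENNReal.div_ne_top hK hc)
  refine ⟨n, fun j hj => ?_⟩
  by_contra! hnj
  have h2n : (n : ℝ≥0∞) ≤ 2 ^ (n : ℤ) := by
    rw [zpow_natCast]
    exact_mod_cast Nat.lt_two_pow_self.le
  have : c * 2 ^ (n : ℤ) ≤ K := (mul_le_mul_right (two_zpow_le_two_zpow_iff.mpr hnj.le) c).trans hj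
  rw [mul_comm] at this
  exact (hn.trans_le h2n).not_ge ((ENNReal.le_div_iff_mul_le (Or.inl hc) (Or.inr hK)).mpr this)

lemma mem_dyadicI_iff {j m : ℤ} {x : ℝ} : x ∈ dyadicI j m ↔ ⌊x / 2 ^ j⌋ = m := by
  have h := zpow_pos (two_pos : (0 : ℝ) < 2) j
  rw [dyadicI, mem_Ico, Int.floor_eq_iff, le_div_iff₀ h, div_lt_iff₀ h, mul_comm (m : ℝ),
    mul_comm ((m : ℝ) + 1)]

lemma floor_div_two_zpow_add (x : ℝ) (j : ℤ) (n : ℕ) :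
    ⌊x / 2 ^ (j + n)⌋ = ⌊x / 2 ^ j⌋ / 2 ^ n := by
  have := Int.floor_div_natCast (x / 2 ^ j) (2 ^ n)
  push_cast at this
  rwa [zpow_add₀ two_ne_zero, zpow_natCast, ← div_div]

lemma volume_dyadicI (j m : ℤ) : volume (dyadicI j m) = 2 ^ j := by
  rw [dyadicI, Real.volume_Ico, ← mul_sub, add_sub_cancel_left, mul_one, ofReal_two_zpow]

lemma volume_dyadicI_ne_top (j m : ℤ) : volume (dyadicI j m) ≠ ⊤ := by
  rw [volume_dyadicI]
  exact ENNReal.zpow_ne_top two_ne_zero ENNReal.ofNat_ne_top j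

lemma dyadicI_nonempty (j m : ℤ) : (dyadicI j m).Nonempty :=
  ⟨2 ^ j * m, mem_dyadicI_iff.mpr <| by
    rw [mul_div_cancel_left₀ _ (zpow_ne_zero _ two_ne_zero), Int.floor_intCast]⟩

def dyadicAncestor (q : ℤ × ℤ) (n : ℕ) : ℤ × ℤ := (q.1 + n, q.2 / 2 ^ n)

lemma dyadicI_subset_dyadicAncestor (q : ℤ × ℤ) (n : ℕ) :
    dyadicI q.1 q.2 ⊆ dyadicI (dyadicAncestor q n).1 (dyadicAncestor q n).2 := by
  intro x hx
  rw [mem_dyadicI_iff] at hx ⊢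
  rw [dyadicAncestor, floor_div_two_zpow_add, hx]

lemma eq_dyadicAncestor_of_mem {p r : ℤ × ℤ} {x : ℝ} (hle : p.1 ≤ r.1)
    (hp : x ∈ dyadicI p.1 p.2) (hr : x ∈ dyadicI r.1 r.2) :
    r = dyadicAncestor p (r.1 - p.1).toNat := by
  have hlevel : p.1 + ((r.1 - p.1).toNat : ℤ) = r.1 := by omega
  rw [mem_dyadicI_iff] at hp hr
  rw [← hlevel, floor_div_two_zpow_add, hp] at hr
  ext
  · exact hlevel.symm
  · exact hr.symm

lemma dyadicI_subset_of_mem {p r : ℤ × ℤ} {x : ℝ} (hle : p.1 ≤ r.1)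
    (hp : x ∈ dyadicI p.1 p.2) (hr : x ∈ dyadicI r.1 r.2) : dyadicI p.1 p.2 ⊆ dyadicI r.1 r.2 := by
  rw [eq_dyadicAncestor_of_mem hle hp hr]
  exact dyadicI_subset_dyadicAncestor p _

lemma le_of_dyadicI_subset {p r : ℤ × ℤ} (h : dyadicI p.1 p.2 ⊆ dyadicI r.1 r.2) : p.1 ≤ r.1 := by
  have := measure_mono (μ := volume) h
  rwa [volume_dyadicI, volume_dyadicI, two_zpow_le_two_zpow_iff] at this

def IsMaximalDyadic (P : ℤ × ℤ → Prop) (p : ℤ × ℤ) : Prop :=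
  P p ∧ ∀ r, P r → dyadicI p.1 p.2 ⊆ dyadicI r.1 r.2 → r = p

lemma exists_isMaximalDyadic {P : ℤ × ℤ → Prop} (hP : BddAbove (Prod.fst '' {q | P q}))
    {q : ℤ × ℤ} (hq : P q) :
    ∃ p, IsMaximalDyadic P p ∧ dyadicI q.1 q.2 ⊆ dyadicI p.1 p.2 := by
  obtain ⟨J, hJ⟩ := hP
  have hN : BddAbove {n : ℕ | P (dyadicAncestor q n)} := by
    refine ⟨(J - q.1).toNat, fun n hn => ?_⟩
    have := hJ ⟨_, hn, rfl⟩
    simp only [dyadicAncestor] at this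
    omega
  set n₀ := sSup {n : ℕ | P (dyadicAncestor q n)}
  have hn₀ : P (dyadicAncestor q n₀) := Nat.sSup_mem ⟨0, by simpa [dyadicAncestor] using hq⟩ hN
  refine ⟨_, ⟨hn₀, fun r hr hsub => ?_⟩, dyadicI_subset_dyadicAncestor q n₀⟩
  obtain ⟨x, hx⟩ := dyadicI_nonempty q.1 q.2
  have hle := le_of_dyadicI_subset hsub
  simp only [dyadicAncestor] at hle
  have hr_eq := eq_dyadicAncestor_of_mem (by omega) hx
    (hsub (dyadicI_subset_dyadicAncestor q n₀ hx))
  have : (r.1 - q.1).toNat ≤ n₀ := le_csSup hN (show P _ from hr_eq ▸ hr)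
  rw [hr_eq, show (r.1 - q.1).toNat = n₀ by omega]

lemma pairwiseDisjoint_isMaximalDyadic (P : ℤ × ℤ → Prop) :
    {p | IsMaximalDyadic P p}.PairwiseDisjoint (fun p => dyadicI p.1 p.2) := by
  intro p hp p' hp' hne
  refine Set.disjoint_left.mpr fun x hx hx' => hne ?_
  rcases le_total p.1 p'.1 with h | h
  · exact (hp.2 p' hp'.1 (dyadicI_subset_of_mem h hx hx')).symm
  · exact hp'.2 p hp.1 (dyadicI_subset_of_mem h hx' hx)

section Average

variable {α : Type*} [MeasurableSpace α] {μ : Measure α} {s : Set α} {f : α → ℝ≥0∞} {t : ℝ≥0∞}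

lemma mul_measure_le_two_mul_setLIntegral_ite (hs : μ s ≠ ⊤) (ht : t ≠ ⊤)
    (h : t < ⨍⁻ x in s, f x ∂μ) :
    t * μ s ≤ 2 * ∫⁻ x in s, (if t < 2 * f x then f x else 0) ∂μ := by
  set g : α → ℝ≥0∞ := fun x => if t < 2 * f x then f x else 0
  have hf : t * μ s ≤ ∫⁻ x in s, f x ∂μ :=
    ENNReal.mul_le_of_le_div (by rw [← setLAverage_eq]; exact h.le)
  have hsplit : ∫⁻ x in s, f x ∂μ ≤ ∫⁻ x in s, g x ∂μ + t / 2 * μ s :=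
    calc ∫⁻ x in s, f x ∂μ ≤ ∫⁻ x in s, (g x + t / 2) ∂μ := by
          refine lintegral_mono fun x => ?_
          simp only [g]
          split_ifs with hx
          · exact le_self_add
          · rw [zero_add, ENNReal.le_div_iff_mul_le (Or.inl two_ne_zero)
              (Or.inl ENNReal.ofNat_ne_top), mul_comm]
            exact not_lt.mp hx
      _ = ∫⁻ x in s, g x ∂μ + t / 2 * μ s := by
          rw [lintegral_add_right _ measurable_const, setLIntegral_const]
  have hhalf : t / 2 * μ s ≤ ∫⁻ x in s, g x ∂μ := by
    refine (ENNReal.add_le_add_iff_right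
      (ENNReal.mul_ne_top (ENNReal.div_ne_top ht two_ne_zero) hs)).mp ?_
    rw [← add_mul, ENNReal.add_halves]
    exact hf.trans hsplit
  calc t * μ s = 2 * (t / 2 * μ s) := by
        rw [← mul_assoc, ENNReal.mul_div_cancel two_ne_zero ENNReal.ofNat_ne_top]
    _ ≤ 2 * ∫⁻ x in s, g x ∂μ := by gcongr

lemma mul_ite_le_two_mul_sq (t y : ℝ≥0∞) : t * (if t < 2 * y then y else 0) ≤ 2 * y ^ 2 := by
  split_ifs with h
  · rw [sq, ← mul_assoc]
    gcongr
  · simp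

lemma mul_mul_measure_le_of_lt_setLAverage (hs : μ s ≠ ⊤) (ht : t ≠ ⊤)
    (h : t < ⨍⁻ x in s, f x ∂μ) : t * t * μ s ≤ 4 * ∫⁻ x, f x ^ 2 ∂μ :=
  calc t * t * μ s ≤ t * (2 * ∫⁻ x in s, (if t < 2 * f x then f x else 0) ∂μ) := by
        rw [mul_assoc]
        exact mul_le_mul_right (mul_measure_le_two_mul_setLIntegral_ite hs ht h) t
    _ ≤ 2 * ∫⁻ x, t * (if t < 2 * f x then f x else 0) ∂μ := by
        rw [mul_left_comm]
        gcongr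
        exact (lintegral_const_mul_le _ _).trans (setLIntegral_le_lintegral _ _)
    _ ≤ 2 * ∫⁻ x, 2 * f x ^ 2 ∂μ :=
        mul_le_mul_right (lintegral_mono fun x => mul_ite_le_two_mul_sq t (f x)) 2
    _ = 4 * ∫⁻ x, f x ^ 2 ∂μ := by
        rw [lintegral_const_mul' 2 _ ENNReal.ofNat_ne_top, ← mul_assoc]
        norm_num

end Average

lemma tsum_ite_two_zpow_lt_le (y : ℝ≥0∞) :
    ∑' k : ℤ, (if (2 : ℝ≥0∞) ^ k < y then (2 : ℝ≥0∞) ^ k else 0) ≤ 2 * y := by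
  rcases eq_or_ne y 0 with rfl | hy0
  · simp
  rcases eq_or_ne y ⊤ with rfl | hy
  · simp
  obtain ⟨K, hK, hK'⟩ := ENNReal.exists_mem_Ioc_zpow hy0 hy ENNReal.one_lt_two ENNReal.ofNat_ne_top
  set f : ℤ → ℝ≥0∞ := fun k => if (2 : ℝ≥0∞) ^ k < y then (2 : ℝ≥0∞) ^ k else 0
  have hsupp : Function.support f ⊆ Set.range (fun n : ℕ => K - n) := by
    intro k hk
    have hky : (2 : ℝ≥0∞) ^ k < y := by
      by_contra h
      exact hk (if_neg h)
    have hkK : k ≤ K := by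
      by_contra! h
      exact (hky.trans_le hK').not_ge (two_zpow_le_two_zpow_iff.mpr h)
    exact ⟨(K - k).toNat, by simp only; omega⟩
  have hinj : Function.Injective (fun n : ℕ => K - n) :=
    (sub_right_injective (b := K)).comp Nat.cast_injective
  rw [← hinj.tsum_eq hsupp]
  calc ∑' n : ℕ, f (K - n) ≤ ∑' n : ℕ, (2 : ℝ≥0∞) ^ K * 2⁻¹ ^ n := by
        refine ENNReal.tsum_le_tsum fun n => ?_
        simp only [f]
        split_ifs
        · rw [ENNReal.zpow_sub two_ne_zero ENNReal.ofNat_ne_top, zpow_natCast, ENNReal.inv_pow]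
        · exact zero_le
    _ = 2 ^ K * 2 := by
        rw [ENNReal.tsum_mul_left, ENNReal.tsum_geometric, ENNReal.one_sub_inv_two, inv_inv]
    _ ≤ 2 * y := by
        rw [mul_comm]
        exact mul_le_mul_right hK.le 2

lemma sq_le_four_mul_tsum (x : ℝ≥0∞) :
    x ^ 2 ≤ 4 * ∑' k : ℤ, (if (2 : ℝ≥0∞) ^ k < x then ((2 : ℝ≥0∞) ^ k) ^ 2 else 0) := by
  rcases eq_or_ne x 0 with rfl | hx0
  · simp
  rcases eq_or_ne x ⊤ with rfl | hx
  · have hlt : ∀ k : ℤ, (2 : ℝ≥0∞) ^ k < ⊤ :=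
      ENNReal.zpow_lt_top two_ne_zero ENNReal.ofNat_ne_top
    suffices ∑' k : ℤ, ((2 : ℝ≥0∞) ^ k) ^ 2 = ⊤ by simp [hlt, this]
    refine top_le_iff.mp ?_
    calc ⊤ = ∑' _ : ℕ, (1 : ℝ≥0∞) := (ENNReal.tsum_const_eq_top_of_ne_zero one_ne_zero).symm
      _ ≤ ∑' n : ℕ, ((2 : ℝ≥0∞) ^ (n : ℤ)) ^ 2 := ENNReal.tsum_le_tsum fun n => by
          rw [zpow_natCast]
          exact one_le_pow₀ (one_le_pow₀ one_le_two)
      _ ≤ ∑' k : ℤ, ((2 : ℝ≥0∞) ^ k) ^ 2 :=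
          ENNReal.tsum_comp_le_tsum_of_injective Nat.cast_injective _
  obtain ⟨K, hK, hK'⟩ := ENNReal.exists_mem_Ioc_zpow hx0 hx ENNReal.one_lt_two ENNReal.ofNat_ne_top
  calc x ^ 2 ≤ ((2 : ℝ≥0∞) ^ (K + 1)) ^ 2 := by gcongr
    _ = 4 * ((2 : ℝ≥0∞) ^ K) ^ 2 := by
        rw [ENNReal.zpow_add two_ne_zero ENNReal.ofNat_ne_top, zpow_one]
        ring
    _ ≤ 4 * ∑' k : ℤ, (if (2 : ℝ≥0∞) ^ k < x then ((2 : ℝ≥0∞) ^ k) ^ 2 else 0) := by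
        refine mul_le_mul_right ?_ 4
        refine le_trans (le_of_eq ?_) (ENNReal.le_tsum K)
        rw [if_pos hK]

lemma tsum_mul_sq_le_four_mul_tsum_layers {ι : Type*} (b x : ι → ℝ≥0∞) :
    ∑' i, b i * x i ^ 2 ≤
      4 * ∑' k : ℤ, ((2 : ℝ≥0∞) ^ k) ^ 2 * ∑' i : {i // (2 : ℝ≥0∞) ^ k < x i}, b i := by
  calc ∑' i, b i * x i ^ 2
      ≤ ∑' i, b i * (4 * ∑' k : ℤ, (if (2 : ℝ≥0∞) ^ k < x i then ((2 : ℝ≥0∞) ^ k) ^ 2 else 0)) :=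
        ENNReal.tsum_le_tsum fun i => mul_le_mul_right (sq_le_four_mul_tsum (x i)) (b i)
    _ = 4 * ∑' k : ℤ, ((2 : ℝ≥0∞) ^ k) ^ 2 * ∑' i, {i | (2 : ℝ≥0∞) ^ k < x i}.indicator b i := by
        simp only [← ENNReal.tsum_mul_left]
        rw [ENNReal.tsum_comm]
        refine tsum_congr fun k => tsum_congr fun i => ?_
        simp only [Set.indicator_apply, Set.mem_ofPred_eq]
        split_ifs <;> ring
    _ = 4 * ∑' k : ℤ, ((2 : ℝ≥0∞) ^ k) ^ 2 * ∑' i : {i // (2 : ℝ≥0∞) ^ k < x i}, b i := by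
        simp only [← tsum_subtype]
        rfl

lemma tsum_two_zpow_mul_ite_le (y : ℝ≥0∞) :
    ∑' k : ℤ, (2 : ℝ≥0∞) ^ k * (if (2 : ℝ≥0∞) ^ k < 2 * y then y else 0) ≤ 4 * y ^ 2 :=
  calc ∑' k : ℤ, (2 : ℝ≥0∞) ^ k * (if (2 : ℝ≥0∞) ^ k < 2 * y then y else 0)
      = (∑' k : ℤ, if (2 : ℝ≥0∞) ^ k < 2 * y then (2 : ℝ≥0∞) ^ k else 0) * y := by
        rw [← ENNReal.tsum_mul_right]
        refine tsum_congr fun k => ?_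
        split_ifs <;> simp
    _ ≤ 2 * (2 * y) * y := mul_le_mul_left (tsum_ite_two_zpow_lt_le _) y
    _ = 4 * y ^ 2 := by ring

section Carleson

variable {F : ℝ → ℝ≥0∞} {b : ℤ × ℤ → ℝ≥0∞} {A t : ℝ≥0∞}

lemma bddAbove_level_of_lt_setLAverage (hF : ∫⁻ x, F x ^ 2 ≠ ⊤) (ht0 : t ≠ 0) (ht : t ≠ ⊤) :
    BddAbove (Prod.fst '' {q : ℤ × ℤ | t < ⨍⁻ x in dyadicI q.1 q.2, F x ∂volume}) := by
  refine (bddAbove_setOf_mul_two_zpow_le (K := 4 * ∫⁻ x, F x ^ 2) (mul_ne_zero ht0 ht0)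
    (ENNReal.mul_ne_top (by norm_num) hF)).mono ?_
  rintro _ ⟨q, hq, rfl⟩
  have := mul_mul_measure_le_of_lt_setLAverage (volume_dyadicI_ne_top q.1 q.2) ht hq
  rwa [volume_dyadicI] at this

lemma mul_tsum_lt_setLAverage_le (hF : ∫⁻ x, F x ^ 2 ≠ ⊤)
    (hb : ∀ j m : ℤ, ∑' I : {q : ℤ × ℤ // dyadicI q.1 q.2 ⊆ dyadicI j m}, b I ≤ A * 2 ^ j)
    (ht0 : t ≠ 0) (ht : t ≠ ⊤) :
    t * ∑' q : {q : ℤ × ℤ // t < ⨍⁻ x in dyadicI q.1 q.2, F x ∂volume}, b q ≤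
      2 * A * ∫⁻ x, (if t < 2 * F x then F x else 0) := by
  set P : ℤ × ℤ → Prop := fun q => t < ⨍⁻ x in dyadicI q.1 q.2, F x ∂volume
  set M := {p | IsMaximalDyadic P p}
  set G : ℝ → ℝ≥0∞ := fun x => if t < 2 * F x then F x else 0
  have hcover : {q | P q} ⊆ ⋃ p ∈ M, {q : ℤ × ℤ | dyadicI q.1 q.2 ⊆ dyadicI p.1 p.2} := by
    intro q hq
    obtain ⟨p, hp, hqp⟩ :=
      exists_isMaximalDyadic (bddAbove_level_of_lt_setLAverage hF ht0 ht) hq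
    exact mem_biUnion hp hqp
  have hdisj : ∑' p : M, ∫⁻ x in dyadicI p.1.1 p.1.2, G x ≤ ∫⁻ x, G x := by
    rw [← lintegral_biUnion M.to_countable (fun _ _ => by exact measurableSet_Ico)
      (pairwiseDisjoint_isMaximalDyadic P)]
    exact setLIntegral_le_lintegral _ _
  calc t * ∑' q : {q // P q}, b q
      ≤ t * ∑' p : M, ∑' q : {q : ℤ × ℤ | dyadicI q.1 q.2 ⊆ dyadicI p.1.1 p.1.2}, b q := by
        gcongr
        exact (ENNReal.tsum_mono_subtype b hcover).trans (ENNReal.tsum_biUnion_le_tsum b M _)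
    _ ≤ t * ∑' p : M, A * volume (dyadicI p.1.1 p.1.2) := by
        gcongr with p
        rw [volume_dyadicI]
        exact hb _ _
    _ = A * ∑' p : M, t * volume (dyadicI p.1.1 p.1.2) := by
        rw [← ENNReal.tsum_mul_left, ← ENNReal.tsum_mul_left]
        exact tsum_congr fun p => mul_left_comm _ _ _
    _ ≤ A * ∑' p : M, 2 * ∫⁻ x in dyadicI p.1.1 p.1.2, G x := by
        exact mul_le_mul_right (ENNReal.tsum_le_tsum fun p =>
          mul_measure_le_two_mul_setLIntegral_ite (volume_dyadicI_ne_top _ _) ht p.2.1) A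
    _ ≤ 2 * A * ∫⁻ x, G x := by
        rw [ENNReal.tsum_mul_left, mul_left_comm, mul_assoc]
        gcongr

theorem tsum_mul_sq_setLAverage_dyadicI_le (hFm : AEMeasurable F) (hF : ∫⁻ x, F x ^ 2 ≠ ⊤)
    (hb : ∀ j m : ℤ, ∑' I : {q : ℤ × ℤ // dyadicI q.1 q.2 ⊆ dyadicI j m}, b I ≤ A * 2 ^ j) :
    ∑' q : ℤ × ℤ, b q * (⨍⁻ x in dyadicI q.1 q.2, F x ∂volume) ^ 2 ≤
      32 * A * ∫⁻ x, F x ^ 2 := by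
  set G : ℤ → ℝ → ℝ≥0∞ := fun k x => if (2 : ℝ≥0∞) ^ k < 2 * F x then F x else 0
  have hG : ∀ k, AEMeasurable (G k) := fun k => by
    have : Measurable fun y : ℝ≥0∞ => if (2 : ℝ≥0∞) ^ k < 2 * y then y else 0 :=
      Measurable.ite (measurableSet_lt measurable_const (measurable_const_mul 2)) measurable_id
        measurable_const
    exact this.comp_aemeasurable hFm
  have htop : ∀ k : ℤ, (2 : ℝ≥0∞) ^ k ≠ ⊤ := ENNReal.zpow_ne_top two_ne_zero ENNReal.ofNat_ne_top
  calc ∑' q : ℤ × ℤ, b q * (⨍⁻ x in dyadicI q.1 q.2, F x ∂volume) ^ 2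
      ≤ 4 * ∑' k : ℤ, ((2 : ℝ≥0∞) ^ k) ^ 2 *
          ∑' q : {q : ℤ × ℤ // 2 ^ k < ⨍⁻ x in dyadicI q.1 q.2, F x ∂volume}, b q :=
        tsum_mul_sq_le_four_mul_tsum_layers _ _
    _ ≤ 4 * ∑' k : ℤ, 2 ^ k * (2 * A * ∫⁻ x, G k x) := by
        refine mul_le_mul_right (ENNReal.tsum_le_tsum fun k => ?_) 4
        rw [sq, mul_assoc]
        exact mul_le_mul_right (mul_tsum_lt_setLAverage_le hF hb
          (ENNReal.zpow_pos two_ne_zero ENNReal.ofNat_ne_top k).ne' (htop k)) _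
    _ = 8 * A * ∫⁻ x, ∑' k : ℤ, 2 ^ k * G k x := by
        rw [lintegral_tsum fun k => (hG k).const_mul _]
        simp only [← ENNReal.tsum_mul_left]
        refine tsum_congr fun k => ?_
        rw [lintegral_const_mul' _ _ (htop k)]
        ring
    _ ≤ 8 * A * ∫⁻ x, 4 * F x ^ 2 :=
        mul_le_mul_right (lintegral_mono fun x => tsum_two_zpow_mul_ite_le (F x)) _
    _ = 32 * A * ∫⁻ x, F x ^ 2 := by
        rw [lintegral_const_mul' _ _ (by norm_num)]
        ring

end Carleson

lemma ofReal_inv_two_zpow_mul_integral_le (h : ℝ → ℝ) (j m : ℤ) :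
    ENNReal.ofReal (((2 : ℝ) ^ j)⁻¹ * ∫ x in dyadicI j m, |h x|) ≤
      ⨍⁻ x in dyadicI j m, ‖h x‖ₑ ∂volume := by
  have hint : ENNReal.ofReal (∫ x in dyadicI j m, |h x|) ≤ ∫⁻ x in dyadicI j m, ‖h x‖ₑ :=
    calc ENNReal.ofReal (∫ x in dyadicI j m, |h x|) = ‖∫ x in dyadicI j m, |h x|‖ₑ :=
          (Real.enorm_of_nonneg (integral_nonneg fun _ => abs_nonneg _)).symm
      _ ≤ ∫⁻ x in dyadicI j m, ‖|h x|‖ₑ := enorm_integral_le_lintegral_enorm _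
      _ = ∫⁻ x in dyadicI j m, ‖h x‖ₑ := by simp only [Real.enorm_abs]
  rw [setLAverage_eq, volume_dyadicI, div_eq_mul_inv, mul_comm ((2 : ℝ) ^ j)⁻¹,
    ENNReal.ofReal_mul' (inv_nonneg.mpr (zpow_pos two_pos j).le),
    ENNReal.ofReal_inv_of_pos (zpow_pos two_pos j), ofReal_two_zpow]
  exact mul_le_mul_left hint _

lemma sq_eLpNorm_two {α E : Type*} [MeasurableSpace α] [NormedAddCommGroup E] (f : α → E)
    (μ : Measure α) : eLpNorm f 2 μ ^ 2 = ∫⁻ x, ‖f x‖ₑ ^ 2 ∂μ := by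
  simpa using eLpNorm_nnreal_pow_eq_lintegral (f := f) (μ := μ) (p := 2) two_ne_zero

/-- Carleson embedding theorem for dyadic averages (Lemma 5.7): if the nonnegative weights
`a(I)` satisfy the Carleson packing condition with constant `A`, then the weighted sum of the
squared dyadic averages of `|h|` is controlled by `C·A·‖h‖₂²`. -/
theorem stmt15 : ∃ C : ℝ, 0 < C ∧
    ∀ (a : ℤ → ℤ → ℝ), (∀ j m : ℤ, 0 ≤ a j m) →
    ∀ A : ℝ, 0 ≤ A →
    (∀ jJ mJ : ℤ,
      ∑' I : {q : ℤ × ℤ // dyadicI q.1 q.2 ⊆ dyadicI jJ mJ},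
          ENNReal.ofReal (a I.1.1 I.1.2) ≤ ENNReal.ofReal (A * (2 : ℝ) ^ jJ)) →
    ∀ h : ℝ → ℝ, MemLp h 2 volume →
      ∑' q : ℤ × ℤ,
          ENNReal.ofReal (a q.1 q.2 *
            (((2 : ℝ) ^ q.1)⁻¹ * ∫ x in dyadicI q.1 q.2, |h x|) ^ 2) ≤
        ENNReal.ofReal (C * A) * eLpNorm h 2 volume ^ 2 := by
  refine ⟨32, by norm_num, fun a ha A hA hcarleson h hh => ?_⟩
  have hb : ∀ j m : ℤ, ∑' I : {q : ℤ × ℤ // dyadicI q.1 q.2 ⊆ dyadicI j m},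
      ENNReal.ofReal (a I.1.1 I.1.2) ≤ ENNReal.ofReal A * 2 ^ j := fun j m => by
    rw [← ofReal_two_zpow, ← ENNReal.ofReal_mul hA]
    exact hcarleson j m
  have hF : ∫⁻ x, ‖h x‖ₑ ^ 2 ≠ ⊤ := by
    rw [← sq_eLpNorm_two]
    exact ENNReal.pow_ne_top hh.eLpNorm_ne_top
  calc ∑' q : ℤ × ℤ, ENNReal.ofReal (a q.1 q.2 *
          (((2 : ℝ) ^ q.1)⁻¹ * ∫ x in dyadicI q.1 q.2, |h x|) ^ 2)
      ≤ ∑' q : ℤ × ℤ, ENNReal.ofReal (a q.1 q.2) *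
          (⨍⁻ x in dyadicI q.1 q.2, ‖h x‖ₑ ∂volume) ^ 2 := ENNReal.tsum_le_tsum fun q => by
        rw [ENNReal.ofReal_mul (ha q.1 q.2), ENNReal.ofReal_pow (by positivity)]
        gcongr
        exact ofReal_inv_two_zpow_mul_integral_le h q.1 q.2
    _ ≤ 32 * ENNReal.ofReal A * ∫⁻ x, ‖h x‖ₑ ^ 2 :=
        tsum_mul_sq_setLAverage_dyadicI_le hh.aemeasurable.enorm hF hb
    _ = ENNReal.ofReal (32 * A) * eLpNorm h 2 volume ^ 2 := by
        rw [ENNReal.ofReal_mul (by norm_num), sq_eLpNorm_two, ENNReal.ofReal_ofNat]
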